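/- arXiv:1101.4803 — 9 statements merged into one kernel-verified Lean document; each statement's English description precedes it below -/
import Mathlib

section
/- Let R be a ring and let c, u, v ∈ R be idempotents such that u and v are orthogonal and such that u + v is Murray–von Neumann equivalent to c. Then there exist orthogonal idempotents a, b ∈ R with c = a + b such that a is Murray–von Neumann equivalent to u and b is Murray–von Neumann equivalent to v. (Lemma 4.1 of the paper, stated at the level of ring elements.) -/
/-- **Lemma 4.1** (at the level of ring elements). Let `R` be a ring and `c, u, v ∈ R`
idempotents such that `u` and `v` are orthogonal and `u + v` is Murray–von Neumann
equivalent to `c`. Then there exist orthogonal idempotents `a, b ∈ R` with `c = a + b`,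
`a` Murray–von Neumann equivalent to `u`, and `b` Murray–von Neumann equivalent to `v`. -/
theorem stmt0 {R : Type*} [Ring R] (c u v : R)
    (hc : c * c = c) (hu : u * u = u) (hv : v * v = v)
    (huv : u * v = 0) (hvu : v * u = 0)
    (hequiv : ∃ x y : R, u + v = x * y ∧ c = y * x) :
    ∃ a b : R, a * a = a ∧ b * b = b ∧ a * b = 0 ∧ b * a = 0 ∧ c = a + b ∧
      (∃ x y : R, a = x * y ∧ u = y * x) ∧ (∃ x y : R, b = x * y ∧ v = y * x) := by
  obtain ⟨x, y, hxy, hyx⟩ := hequiv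
  have hx : ∀ z : R, x * (y * z) = u * z + v * z := by
    intro z; rw [← mul_assoc, ← hxy, add_mul]
  have hy : ∀ z : R, y * (x * z) = c * z := by
    intro z; rw [← mul_assoc, ← hyx]
  have hc' : ∀ z : R, c * (c * z) = c * z := by
    intro z; rw [← mul_assoc, hc]
  have hu' : ∀ z : R, u * (u * z) = u * z := by
    intro z; rw [← mul_assoc, hu]
  have hv' : ∀ z : R, v * (v * z) = v * z := by
    intro z; rw [← mul_assoc, hv]
  have huv' : ∀ z : R, u * (v * z) = 0 := by
    intro z; rw [← mul_assoc, huv, zero_mul]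
  have hvu' : ∀ z : R, v * (u * z) = 0 := by
    intro z; rw [← mul_assoc, hvu, zero_mul]
  set X : R := (u + v) * (x * c) with hX
  set Y : R := c * (y * (u + v)) with hY
  have hxcy : ∀ z : R, x * (c * (y * z)) = u * z + v * z := by
    intro z
    rw [hyx]
    simp only [mul_assoc, hx, mul_add, hu', hv', huv', hvu', add_zero, zero_add]
  have hXY : ∀ z : R, X * (Y * z) = u * z + v * z := by
    intro z
    rw [hX, hY, hxy]
    simp only [mul_assoc, hy, hc']
    exact hxcy z
  have hYX : ∀ z : R, Y * (X * z) = c * z := by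
    intro z
    rw [hX, hY, hxy]
    simp only [mul_assoc, hy, hc']
  have hXY0 : X * Y = u + v := by
    have := hXY 1; simpa using this
  have hYX0 : Y * X = c := by
    have := hYX 1; simpa using this
  refine ⟨Y * (u * X), Y * (v * X), ?_, ?_, ?_, ?_, ?_, ⟨Y * u, u * X, ?_, ?_⟩,
    ⟨Y * v, v * X, ?_, ?_⟩⟩
  · simp only [mul_assoc, hXY, mul_add, hu', hv', huv', hvu', add_zero, zero_add, mul_zero]
  · simp only [mul_assoc, hXY, mul_add, hu', hv', huv', hvu', add_zero, zero_add, mul_zero]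
  · simp only [mul_assoc, hXY, mul_add, hu', hv', huv', hvu', add_zero, zero_add, mul_zero]
  · simp only [mul_assoc, hXY, mul_add, hu', hv', huv', hvu', add_zero, zero_add, mul_zero]
  · rw [← mul_add, ← add_mul, ← hXY0, mul_assoc X Y X, hYX, hYX0, hc]
  · simp only [mul_assoc, hu']
  · simp only [mul_assoc, hXY, mul_add, hu', hv', huv', hvu', add_zero, zero_add, mul_zero,
      hu, hv, huv, hvu]
  · simp only [mul_assoc, hv']
  · simp only [mul_assoc, hXY, mul_add, hu', hv', huv', hvu', add_zero, zero_add, mul_zero,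
      hu, hv, huv, hvu]
end

section
/- Let n ≥ 1 and let R be a unital ring with index of nilpotence at most n, i.e., every x ∈ R with x^(n+1) = 0 satisfies x^n = 0. Suppose a, e₀, e₁, …, e_n ∈ R are pairwise orthogonal idempotents with 1 = a + e₀ + e₁ + ⋯ + e_n, and the idempotents e₀, …, e_n are pairwise Murray–von Neumann equivalent. Then e_i = 0 for every i. (This is the first assertion of Lemma 4.3: the class of 1 has index at most n in V(R).) -/
/-!
Chaining the equivalences `e₀ ∼ e₁ ∼ ⋯ ∼ eₙ` gives elements `yᵢ ∈ eᵢ₊₁ R eᵢ` with left inverses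
`xᵢ yᵢ = eᵢ`. Their sum `s` moves each corner `eᵢ` into `eᵢ₊₁` and kills `a` and `eₙ`, so
`s ^ (n + 1) = 0`, hence `s ^ n = 0` by the bound on the index of nilpotence. But
`s ^ n e₀ = yₙ₋₁ ⋯ y₀ e₀` has the left inverse `x₀ ⋯ xₙ₋₁`, so `e₀ = 0`; every `eᵢ` is equivalent
to `e₀`, so it vanishes too.
-/

open Finset

section

variable {R : Type*} [Ring R]

theorem IsIdempotentElem.eq_zero_of_mul_swap_eq_zero {x y : R} (h : IsIdempotentElem (y * x))
    (hxy : x * y = 0) : y * x = 0 := by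
  rw [← h.eq, mul_assoc, ← mul_assoc x, hxy, zero_mul, mul_zero]

/-- Replacing `x, y` by `x y x, y x y` puts `y` into the corner `f R e`. -/
theorem exists_mul_eq_of_murrayVonNeumann {e f : R} (he : IsIdempotentElem e)
    (h : ∃ x y : R, e = x * y ∧ f = y * x) : ∃ x y : R, x * y = e ∧ y * e = y ∧ f * y = y := by
  obtain ⟨x, y, rfl, rfl⟩ := h
  have hyxy : y * (x * y * (x * y)) = y * x * y := by rw [he.eq, mul_assoc]
  refine ⟨x * y * x, y * x * y, ?_, ?_, ?_⟩
  · calc x * y * x * (y * x * y) = x * y * (x * y) * (x * y) := by simp only [mul_assoc]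
      _ = x * y := by rw [he.eq, he.eq]
  · calc y * x * y * (x * y) = y * (x * y * (x * y)) := by simp only [mul_assoc]
      _ = y * x * y := hyxy
  · calc y * x * (y * x * y) = y * (x * y * (x * y)) := by simp only [mul_assoc]
      _ = y * x * y := hyxy

theorem sum_mul_eq_ite {ι : Type*} [DecidableEq ι] {e y : ι → R} {S : Finset ι}
    (horth : ∀ i j, i ≠ j → e i * e j = 0) (hy : ∀ i ∈ S, y i * e i = y i) (j : ι) :
    (∑ i ∈ S, y i) * e j = if j ∈ S then y j else 0 := by
  rw [sum_mul, ← sum_ite_eq' S j y]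
  refine sum_congr rfl fun i hi => ?_
  split_ifs with hij
  · rw [hij, hy j (hij ▸ hi)]
  · rw [← hy i hi, mul_assoc, horth i j hij, mul_zero]

section Shift

variable {f : ℕ → R} {s : R}

theorem pow_mul_eq_mul_pow_mul (hf : ∀ i, IsIdempotentElem (f i))
    (hs : ∀ i, s * f i = f (i + 1) * (s * f i)) (k i : ℕ) :
    s ^ k * f i = f (i + k) * (s ^ k * f i) := by
  induction k with
  | zero => simp [(hf i).eq]
  | succ k ih =>
    have h : s ^ (k + 1) * f i = s * f (i + k) * (s ^ k * f i) := by
      rw [pow_succ', mul_assoc, mul_assoc s, ← ih]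
    rw [h]
    conv_lhs => rw [hs]
    simp only [mul_assoc, add_assoc]

theorem pow_succ_eq_zero_of_shift {a : R} {n : ℕ} (hf : ∀ i, IsIdempotentElem (f i))
    (hs : ∀ i, s * f i = f (i + 1) * (s * f i)) (hsa : s * a = 0)
    (hvanish : ∀ i, n < i → f i = 0) (hone : 1 = a + ∑ i ∈ range (n + 1), f i) :
    s ^ (n + 1) = 0 := by
  have ha : s ^ (n + 1) * a = 0 := by rw [pow_succ, mul_assoc, hsa, mul_zero]
  have hf0 : ∀ i, s ^ (n + 1) * f i = 0 := fun i => by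
    rw [pow_mul_eq_mul_pow_mul hf hs, hvanish (i + (n + 1)) (by omega), zero_mul]
  calc s ^ (n + 1) = s ^ (n + 1) * a + ∑ i ∈ range (n + 1), s ^ (n + 1) * f i := by
        rw [← mul_sum, ← mul_add, ← hone, mul_one]
    _ = 0 := by simp [ha, hf0]

theorem exists_mul_pow_mul_eq (hf : ∀ i, IsIdempotentElem (f i))
    (hs : ∀ i, s * f i = f (i + 1) * (s * f i)) {k : ℕ}
    (hinv : ∀ i < k, ∃ x, x * (s * f i) = f i) : ∃ z, z * (s ^ k * f 0) = f 0 := by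
  induction k with
  | zero => exact ⟨1, by simp⟩
  | succ k ih =>
    obtain ⟨z, hz⟩ := ih fun i hi => hinv i (by omega)
    obtain ⟨x, hx⟩ := hinv k (by omega)
    have hk : s ^ k * f 0 = f k * (s ^ k * f 0) := by
      simpa using pow_mul_eq_mul_pow_mul hf hs k 0
    refine ⟨z * x, ?_⟩
    calc z * x * (s ^ (k + 1) * f 0) = z * (x * (s * f k)) * (s ^ k * f 0) := by
          conv_lhs => rw [pow_succ', mul_assoc s, hk]
          simp only [mul_assoc]
      _ = f 0 := by rw [hx, mul_assoc, ← hk, hz]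

theorem exists_shift_of_chain {a : R} {n : ℕ} (hf : ∀ i, IsIdempotentElem (f i))
    (horth : ∀ i j, i ≠ j → f i * f j = 0) (hfa : ∀ i, f i * a = 0)
    (hequiv : ∀ i < n, ∃ x y : R, f i = x * y ∧ f (i + 1) = y * x) :
    ∃ s : R, s * a = 0 ∧ (∀ i, s * f i = f (i + 1) * (s * f i)) ∧
      ∀ i < n, ∃ x, x * (s * f i) = f i := by
  choose! x y hxy hyr hyl using fun i hi => exists_mul_eq_of_murrayVonNeumann (hf i) (hequiv i hi)
  have hyr' : ∀ i ∈ range n, y i * f i = y i := fun i hi => hyr i (mem_range.1 hi)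
  refine ⟨∑ i ∈ range n, y i, ?_, fun i => ?_, fun i hi => ⟨x i, ?_⟩⟩
  · refine sum_mul (range n) y a ▸ sum_eq_zero fun i hi => ?_
    rw [← hyr' i hi, mul_assoc, hfa, mul_zero]
  · rw [sum_mul_eq_ite horth hyr']
    split_ifs with hi
    · exact (hyl i (mem_range.1 hi)).symm
    · rw [mul_zero]
  · rw [sum_mul_eq_ite horth hyr', if_pos (mem_range.2 hi), hxy i hi]

theorem eq_zero_of_chain {a : R} {n : ℕ} (hnil : ∀ x : R, x ^ (n + 1) = 0 → x ^ n = 0)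
    (hf : ∀ i, IsIdempotentElem (f i)) (horth : ∀ i j, i ≠ j → f i * f j = 0)
    (hfa : ∀ i, f i * a = 0) (hvanish : ∀ i, n < i → f i = 0)
    (hone : 1 = a + ∑ i ∈ range (n + 1), f i)
    (hequiv : ∀ i < n, ∃ x y : R, f i = x * y ∧ f (i + 1) = y * x) : f 0 = 0 := by
  obtain ⟨s, hsa, hs, hinv⟩ := exists_shift_of_chain hf horth hfa hequiv
  obtain ⟨z, hz⟩ := exists_mul_pow_mul_eq hf hs hinv
  rw [← hz, hnil s (pow_succ_eq_zero_of_shift hf hs hsa hvanish hone), zero_mul, mul_zero]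

end Shift

end

theorem stmt1_general {R : Type*} [Ring R] (n : ℕ)
    (hnil : ∀ x : R, x ^ (n + 1) = 0 → x ^ n = 0)
    (a : R) (e : Fin (n + 1) → R)
    (he : ∀ i, e i * e i = e i)
    (hea : ∀ i, e i * a = 0)
    (hee : ∀ i j, i ≠ j → e i * e j = 0)
    (hsum : (1 : R) = a + ∑ i, e i)
    (hequiv : ∀ i j, ∃ x y : R, e i = x * y ∧ e j = y * x) :
    ∀ i, e i = 0 := by
  set f : ℕ → R := fun i => if h : i < n + 1 then e ⟨i, h⟩ else 0 with hf_def
  have hfe : ∀ i (h : i < n + 1), f i = e ⟨i, h⟩ := fun i h => dif_pos h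
  have h0 : f 0 = 0 := by
    refine eq_zero_of_chain (a := a) hnil (fun i => ?_) (fun i j hij => ?_) (fun i => ?_)
      (fun i hi => dif_neg (by omega)) ?_ (fun i hi => ?_)
    · simp only [hf_def]; split_ifs
      exacts [he _, IsIdempotentElem.zero]
    · simp only [hf_def]; split_ifs
      exacts [hee _ _ (by simpa [Fin.ext_iff] using hij), mul_zero _, zero_mul _, zero_mul _]
    · simp only [hf_def]; split_ifs
      exacts [hea _, zero_mul _]
    · rw [hsum, ← Fin.sum_univ_eq_sum_range]
      exact congrArg (a + ·) (sum_congr rfl fun i _ => (hfe i i.2).symm)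
    · rw [hfe i (by omega), hfe (i + 1) (by omega)]
      exact hequiv _ _
  intro i
  obtain ⟨x, y, h0i, hi⟩ := hequiv 0 i
  have hyx : IsIdempotentElem (y * x) := hi ▸ he i
  rw [hi, hyx.eq_zero_of_mul_swap_eq_zero (h0i ▸ hfe 0 (by omega) ▸ h0)]

/-- **First assertion of Lemma 4.3.** Let `n ≥ 1` and let `R` be a unital ring with index
of nilpotence at most `n` (every `x` with `x^(n+1) = 0` satisfies `x^n = 0`). If
`a, e₀, …, e_n` are pairwise orthogonal idempotents with `1 = a + e₀ + ⋯ + e_n` and the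
`e_i` are pairwise Murray–von Neumann equivalent, then every `e_i` is zero. -/
theorem stmt1 {R : Type*} [Ring R] (n : ℕ) (hn : 1 ≤ n)
    (hnil : ∀ x : R, x ^ (n + 1) = 0 → x ^ n = 0)
    (a : R) (e : Fin (n + 1) → R)
    (ha : a * a = a) (he : ∀ i, e i * e i = e i)
    (hae : ∀ i, a * e i = 0) (hea : ∀ i, e i * a = 0)
    (hee : ∀ i j, i ≠ j → e i * e j = 0)
    (hsum : (1 : R) = a + ∑ i, e i)
    (hequiv : ∀ i j, ∃ x y : R, e i = x * y ∧ e j = y * x) :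
    ∀ i, e i = 0 :=
  stmt1_general n hnil a e he hea hee hsum hequiv
end

section
/- Let A be a C*-algebra and let L be a left ideal of A. Then every projection p belonging to the topological closure of L is Murray–von Neumann equivalent to some projection q belonging to L; that is, there exist a projection q ∈ L and elements x, y ∈ A with p = x*y and q = y*x. (Lemma 4.4 of the paper.) -/
/-- Auxiliary function: continuous cutoff equal to `0` near `0` and `1` near `1`. -/
noncomputable def f44 : ℝ → ℝ := fun t => min 1 (max 0 (4 * t - 2))

/-- Auxiliary function: `f44 t / t`, implemented in a manifestly continuous fashion. -/
noncomputable def w44 : ℝ → ℝ := fun t => f44 t * (max t (1/2))⁻¹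

lemma f44_cont : Continuous f44 :=
  continuous_const.min (continuous_const.max
    ((continuous_const.mul continuous_id).sub continuous_const))

lemma w44_cont : Continuous w44 :=
  f44_cont.mul <| (continuous_id.max continuous_const).inv₀ fun x =>
    ne_of_gt (lt_of_lt_of_le one_half_pos (le_max_right x _))

lemma f44_zero : f44 0 = 0 := by unfold f44; norm_num

lemma w44_zero : w44 0 = 0 := by unfold w44; rw [f44_zero, zero_mul]

lemma f44_low {μ : ℝ} (hμ : |μ| ≤ 1/8) : f44 μ = 0 ∧ w44 μ = 0 := by
  rw [abs_le] at hμ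
  have h1 : f44 μ = 0 := by
    unfold f44
    rw [max_eq_left (by linarith), min_eq_right zero_le_one]
  exact ⟨h1, by unfold w44; rw [h1, zero_mul]⟩

lemma f44_high {μ : ℝ} (hμ : |μ - 1| ≤ 1/8) :
    f44 μ = 1 ∧ w44 μ = μ⁻¹ ∧ 7/8 ≤ μ ∧ μ ≤ 9/8 := by
  rw [abs_le] at hμ
  have h78 : 7/8 ≤ μ := by linarith
  have h1 : f44 μ = 1 := by
    unfold f44
    rw [max_eq_right (by linarith), min_eq_left (by linarith)]
  refine ⟨h1, ?_, h78, by linarith⟩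
  unfold w44
  rw [h1, one_mul, max_eq_left (by linarith)]

set_option maxHeartbeats 1000000 in
/-- **Lemma 4.4.** Let `A` be a C*-algebra and `L` a left ideal of `A`. Then every
projection `p` in the topological closure of `L` is Murray–von Neumann equivalent to
some projection `q` belonging to `L`. -/
theorem stmt2 {A : Type*} [NonUnitalNormedRing A] [StarRing A] [CStarRing A]
    [CompleteSpace A] [NormedSpace ℂ A] [IsScalarTower ℂ A A] [SMulCommClass ℂ A A]
    [StarModule ℂ A]
    (L : AddSubgroup A) (hL : ∀ a : A, ∀ x ∈ L, a * x ∈ L)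
    (p : A) (hp_sa : star p = p) (hp_idem : p * p = p)
    (hp_mem : p ∈ closure (L : Set A)) :
    ∃ q ∈ L, star q = q ∧ q * q = q ∧ ∃ x y : A, p = x * y ∧ q = y * x := by
  letI : NonUnitalCStarAlgebra A :=
    { ‹NonUnitalNormedRing A›, ‹StarRing A›, ‹CompleteSpace A›, ‹CStarRing A›,
      ‹NormedSpace ℂ A›, ‹IsScalarTower ℂ A A›, ‹SMulCommClass ℂ A A›, ‹StarModule ℂ A› with }
  have tri : ∀ x y z : A, ‖x * y * z‖ ≤ ‖x‖ * ‖y‖ * ‖z‖ := fun x y z =>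
    (norm_mul_le (x * y) z).trans (mul_le_mul_of_nonneg_right (norm_mul_le x y) (norm_nonneg z))
  -- ‖p‖ ≤ 1
  have hpnorm : ‖p‖ ≤ 1 := by
    have h1 : ‖p‖ * ‖p‖ = ‖p‖ := by
      calc ‖p‖ * ‖p‖ = ‖star p * p‖ := (CStarRing.norm_star_mul_self).symm
      _ = ‖p‖ := by rw [hp_sa, hp_idem]
    nlinarith [norm_nonneg p]
  -- approximate p from inside L by b with p * b = b
  obtain ⟨b, hbL, hpb, hbp, hb_close⟩ :
      ∃ b ∈ L, p * b = b ∧ star b * p = star b ∧ ‖p - b‖ ≤ 1/1000 := by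
    rw [Metric.mem_closure_iff] at hp_mem
    obtain ⟨a, haL, ha⟩ := hp_mem (1/1000) (by norm_num)
    rw [dist_eq_norm] at ha
    refine ⟨p * a, hL p a haL, by rw [← mul_assoc, hp_idem], ?_, ?_⟩
    · rw [star_mul, hp_sa, mul_assoc, hp_idem]
    · have hpb2 : p - p * a = p * (p - a) := by rw [mul_sub, hp_idem]
      rw [hpb2]
      calc ‖p * (p - a)‖ ≤ ‖p‖ * ‖p - a‖ := norm_mul_le _ _
      _ ≤ 1 * (1/1000) := mul_le_mul hpnorm ha.le (norm_nonneg _) zero_le_one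
      _ = 1/1000 := one_mul _
  have hbnorm : ‖b‖ ≤ 2 := by
    have h1 : ‖b‖ ≤ ‖p‖ + ‖p - b‖ := by
      calc ‖b‖ = ‖p - (p - b)‖ := by rw [sub_sub_cancel]
      _ ≤ ‖p‖ + ‖p - b‖ := norm_sub_le _ _
    linarith
  -- h = b* b ∈ L, selfadjoint, close to p
  set h : A := star b * b with hhdef
  have hhL : h ∈ L := hL (star b) b hbL
  have hh_sa : IsSelfAdjoint h := IsSelfAdjoint.star_mul_self b
  have hhp : ‖h - p‖ ≤ 3/1000 := by
    have key : h - p = star b * (b - p) + star (b - p) * p := by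
      rw [star_sub, hp_sa, mul_sub, sub_mul, hhdef, hp_idem]
      abel
    rw [key]
    have n1 : ‖star b * (b - p)‖ ≤ 2 * (1/1000) := by
      calc ‖star b * (b - p)‖ ≤ ‖star b‖ * ‖b - p‖ := norm_mul_le _ _
      _ ≤ 2 * (1/1000) := by
          rw [norm_star, norm_sub_rev]
          exact mul_le_mul hbnorm hb_close (norm_nonneg _) (by norm_num)
    have n2 : ‖star (b - p) * p‖ ≤ (1/1000) * 1 := by
      calc ‖star (b - p) * p‖ ≤ ‖star (b - p)‖ * ‖p‖ := norm_mul_le _ _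
      _ ≤ (1/1000) * 1 := by
          rw [norm_star, norm_sub_rev]
          exact mul_le_mul hb_close hpnorm (norm_nonneg _) (by norm_num)
    calc ‖star b * (b - p) + star (b - p) * p‖
        ≤ ‖star b * (b - p)‖ + ‖star (b - p) * p‖ := norm_add_le _ _
    _ ≤ 3/1000 := by linarith
  have hph : ‖p - h‖ ≤ 3/1000 := by rw [norm_sub_rev]; exact hhp
  have hhnorm : ‖h‖ ≤ 2 := by
    have h1 : ‖h‖ ≤ ‖p‖ + ‖h - p‖ := by
      calc ‖h‖ = ‖p + (h - p)‖ := by rw [add_sub_cancel]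
      _ ≤ ‖p‖ + ‖h - p‖ := norm_add_le _ _
    linarith
  have hhh : ‖h * h - h‖ ≤ 1/16 := by
    have key : h * h - h = h * (h - p) + (h - p) * p + (p - h) := by
      rw [mul_sub, sub_mul, hp_idem]; abel
    rw [key]
    have n1 : ‖h * (h - p)‖ ≤ 2 * (3/1000) :=
      (norm_mul_le _ _).trans (mul_le_mul hhnorm hhp (norm_nonneg _) (by norm_num))
    have n2 : ‖(h - p) * p‖ ≤ (3/1000) * 1 :=
      (norm_mul_le _ _).trans (mul_le_mul hhp hpnorm (norm_nonneg _) (by norm_num))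
    calc ‖h * (h - p) + (h - p) * p + (p - h)‖
        ≤ ‖h * (h - p) + (h - p) * p‖ + ‖p - h‖ := norm_add_le _ _
    _ ≤ ‖h * (h - p)‖ + ‖(h - p) * p‖ + ‖p - h‖ := by
        linarith [norm_add_le (h * (h - p)) ((h - p) * p)]
    _ ≤ 1/16 := by linarith
  clear_value h
  -- spectrum of h is near {0, 1}
  have hspec : ∀ μ ∈ quasispectrum ℝ h, |μ| ≤ 1/8 ∨ |μ - 1| ≤ 1/8 := by
    intro μ hμ
    have hcfc : cfcₙ (fun t : ℝ => t * t - t) h = h * h - h := by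
      rw [cfcₙ_sub (fun t : ℝ => t * t) (fun t : ℝ => t) h (by fun_prop) (by norm_num)
        (by fun_prop) rfl,
        cfcₙ_mul (fun t : ℝ => t) (fun t : ℝ => t) h (by fun_prop) rfl (by fun_prop) rfl,
        cfcₙ_id' ℝ h hh_sa]
    have hb1 : |μ * μ - μ| ≤ ‖h * h - h‖ := by
      have := norm_apply_le_norm_cfcₙ (fun t : ℝ => t * t - t) h hμ
        (by fun_prop) (by norm_num) hh_sa
      rw [hcfc] at this
      simpa [Real.norm_eq_abs] using this
    have hle : |μ * μ - μ| ≤ 1/16 := hb1.trans hhh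
    by_contra hcon
    push_neg at hcon
    obtain ⟨h1', h2'⟩ := hcon
    have habs : |μ * μ - μ| = |μ| * |μ - 1| := by
      rw [← abs_mul]; ring_nf
    have e1 : μ ≤ |μ| := le_abs_self μ
    have e2 : 1 - μ ≤ |μ - 1| := by rw [abs_sub_comm]; exact le_abs_self _
    nlinarith [abs_nonneg μ, abs_nonneg (μ - 1)]
  -- case analysis on spectrum
  have hcase : ∀ μ ∈ quasispectrum ℝ h,
      (f44 μ = 0 ∧ w44 μ = 0) ∨ (f44 μ = 1 ∧ w44 μ = μ⁻¹ ∧ 7/8 ≤ μ ∧ μ ≤ 9/8) := by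
    intro μ hμ
    rcases hspec μ hμ with hc | hc
    · exact Or.inl (f44_low hc)
    · exact Or.inr (f44_high hc)
  set W : A := cfcₙ w44 h with hWdef
  set q : A := cfcₙ f44 h with hqdef
  have hW_sa : IsSelfAdjoint W := cfcₙ_predicate w44 h
  have hq_sa : IsSelfAdjoint q := cfcₙ_predicate f44 h
  -- W * h = q and h * W = q
  have hWh : W * h = q := by
    calc W * h = cfcₙ w44 h * cfcₙ (fun t : ℝ => t) h := by rw [cfcₙ_id' ℝ h hh_sa]
    _ = cfcₙ (fun t : ℝ => w44 t * t) h :=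
        (cfcₙ_mul w44 (fun t : ℝ => t) h (w44_cont.continuousOn) w44_zero
          (by fun_prop) rfl).symm
    _ = q := by
        refine cfcₙ_congr fun μ hμ => ?_
        rcases hcase μ hμ with ⟨h1, h2⟩ | ⟨h1, h2, h3, h4⟩
        · simp [h1, h2]
        · rw [h2, h1, inv_mul_cancel₀ (by linarith)]
  have hhW : h * W = q := by
    calc h * W = cfcₙ (fun t : ℝ => t) h * cfcₙ w44 h := by rw [cfcₙ_id' ℝ h hh_sa]
    _ = cfcₙ (fun t : ℝ => t * w44 t) h :=
        (cfcₙ_mul (fun t : ℝ => t) w44 h (by fun_prop) rfl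
          (w44_cont.continuousOn) w44_zero).symm
    _ = q := by
        refine cfcₙ_congr fun μ hμ => ?_
        rcases hcase μ hμ with ⟨h1, h2⟩ | ⟨h1, h2, h3, h4⟩
        · simp [h1, h2]
        · rw [h2, h1, mul_inv_cancel₀ (by linarith)]
  have hq_mem : q ∈ L := hWh ▸ hL W h hhL
  have hq_idem : q * q = q := by
    calc q * q = cfcₙ (fun t : ℝ => f44 t * f44 t) h :=
        (cfcₙ_mul f44 f44 h (f44_cont.continuousOn) f44_zero
          (f44_cont.continuousOn) f44_zero).symm
    _ = q := by
        refine cfcₙ_congr fun μ hμ => ?_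
        rcases hcase μ hμ with ⟨h1, h2⟩ | ⟨h1, h2, h3, h4⟩ <;> simp [h1]
  -- W * h * W = W
  have hWhW : W * h * W = W := by
    rw [hWh]
    calc q * W = cfcₙ (fun t : ℝ => f44 t * w44 t) h :=
        (cfcₙ_mul f44 w44 h (f44_cont.continuousOn) f44_zero
          (w44_cont.continuousOn) w44_zero).symm
    _ = W := by
        refine cfcₙ_congr fun μ hμ => ?_
        rcases hcase μ hμ with ⟨h1, h2⟩ | ⟨h1, h2, h3, h4⟩ <;> simp [h1, h2]
  -- norm bounds coming from the functional calculus
  have hW2 : ‖W‖ ≤ 2 := by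
    refine norm_cfcₙ_le fun μ hμ => ?_
    rcases hcase μ hμ with ⟨h1, h2⟩ | ⟨h1, h2, h3, h4⟩
    · simp [h2]
    · rw [h2, Real.norm_eq_abs]
      have hμpos : (0:ℝ) < μ := by linarith
      rw [abs_of_pos (inv_pos.mpr hμpos)]
      nlinarith [inv_mul_cancel₀ (ne_of_gt hμpos), inv_pos.mpr hμpos]
  have hqh : ‖q * h - q‖ ≤ 1/8 := by
    have h1 : q * h - q = cfcₙ (fun t : ℝ => f44 t * t - f44 t) h := by
      rw [cfcₙ_sub (fun t : ℝ => f44 t * t) f44 h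
        ((f44_cont.mul continuous_id).continuousOn) (by simp [f44_zero])
        (f44_cont.continuousOn) f44_zero,
        cfcₙ_mul f44 (fun t : ℝ => t) h (f44_cont.continuousOn) f44_zero (by fun_prop) rfl,
        cfcₙ_id' ℝ h hh_sa]
    rw [h1]
    refine norm_cfcₙ_le fun μ hμ => ?_
    rcases hcase μ hμ with ⟨h1, h2⟩ | ⟨h1, h2, h3, h4⟩
    · simp [h1]
    · rw [h1, one_mul, Real.norm_eq_abs, abs_le]
      constructor <;> linarith
  have hqmh : ‖q - h‖ ≤ 1/8 := by
    have h1 : q - h = cfcₙ (fun t : ℝ => f44 t - t) h := by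
      rw [cfcₙ_sub f44 (fun t : ℝ => t) h (f44_cont.continuousOn) f44_zero (by fun_prop) rfl,
        cfcₙ_id' ℝ h hh_sa]
    rw [h1]
    refine norm_cfcₙ_le fun μ hμ => ?_
    rcases hspec μ hμ with hc | hc
    · obtain ⟨h1, _⟩ := f44_low hc
      rw [h1, Real.norm_eq_abs, abs_sub_comm, sub_zero]
      exact hc
    · obtain ⟨h1, _, h3, h4⟩ := f44_high hc
      rw [h1, Real.norm_eq_abs, abs_sub_comm, abs_le]
      constructor <;> linarith
  clear_value W q
  have hqp : ‖q - p‖ ≤ 1/8 + 3/1000 := by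
    calc ‖q - p‖ = ‖(q - h) + (h - p)‖ := by abel_nf
    _ ≤ ‖q - h‖ + ‖h - p‖ := norm_add_le _ _
    _ ≤ 1/8 + 3/1000 := by linarith
  have hbmp : ‖b - p‖ ≤ 1/1000 := by rw [norm_sub_rev]; exact hb_close
  have hsbmp : ‖star b - p‖ ≤ 1/1000 := by
    calc ‖star b - p‖ = ‖star (b - p)‖ := by rw [star_sub, hp_sa]
    _ = ‖b - p‖ := norm_star _
    _ ≤ 1/1000 := hbmp
  have hsbnorm : ‖star b‖ ≤ 2 := by rw [norm_star]; exact hbnorm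
  -- the candidate e = b * W * star b
  set e : A := b * W * star b with hedef
  have he_sa : star e = e := by
    rw [hedef, star_mul, star_mul, star_star, hW_sa.star_eq, mul_assoc]
  have he_idem : e * e = e := by
    have hmm : e * e = b * (W * h * W) * star b := by
      rw [hedef, hhdef]
      noncomm_ring
    rw [hmm, hWhW, hedef]
  have hpe : p * e = e := by
    rw [hedef]
    calc p * (b * W * star b) = (p * b) * W * star b := by noncomm_ring
    _ = b * W * star b := by rw [hpb]
  have hep : e * p = e := by
    rw [hedef, mul_assoc (b * W) (star b) p, hbp]
  -- decomposition of e - p, and the norm estimate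
  have hdecomp : e - p = (b - p) * W * star b + p * W * (star b - p)
      + ((p - h) * W * p + h * W * (p - h)) + (q * h - q) + (q - p) := by
    rw [hedef, ← hhW, hhdef]
    noncomm_ring
  have he_close : ‖e - p‖ < 1 := by
    have n1 : ‖(b - p) * W * star b‖ ≤ 1/1000 * 2 * 2 := by
      refine (tri _ _ _).trans ?_
      gcongr
    have n2 : ‖p * W * (star b - p)‖ ≤ 1 * 2 * (1/1000) := by
      refine (tri _ _ _).trans ?_
      gcongr
    have n3a : ‖(p - h) * W * p‖ ≤ 3/1000 * 2 * 1 := by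
      refine (tri _ _ _).trans ?_
      gcongr
    have n3b : ‖h * W * (p - h)‖ ≤ 2 * 2 * (3/1000) := by
      refine (tri _ _ _).trans ?_
      gcongr
    rw [hdecomp]
    have A1 := norm_add_le ((b - p) * W * star b + p * W * (star b - p)
      + ((p - h) * W * p + h * W * (p - h)) + (q * h - q)) (q - p)
    have A2 := norm_add_le ((b - p) * W * star b + p * W * (star b - p)
      + ((p - h) * W * p + h * W * (p - h))) (q * h - q)
    have A3 := norm_add_le ((b - p) * W * star b + p * W * (star b - p))
      ((p - h) * W * p + h * W * (p - h))
    have A4 := norm_add_le ((b - p) * W * star b) (p * W * (star b - p))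
    have A5 := norm_add_le ((p - h) * W * p) (h * W * (p - h))
    linarith
  -- conclude e = p
  have hep' : e = p := by
    have hr_sa : star (p - e) = p - e := by rw [star_sub, hp_sa, he_sa]
    have hr_idem : (p - e) * (p - e) = p - e := by
      rw [sub_mul, mul_sub, mul_sub, hp_idem, hpe, hep, he_idem]; abel
    have hnr : ‖p - e‖ * ‖p - e‖ = ‖p - e‖ := by
      calc ‖p - e‖ * ‖p - e‖ = ‖star (p - e) * (p - e)‖ := (CStarRing.norm_star_mul_self).symm
      _ = ‖p - e‖ := by rw [hr_sa, hr_idem]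
    have hlt : ‖p - e‖ < 1 := by rw [norm_sub_rev]; exact he_close
    have h0 : ‖p - e‖ = 0 := by nlinarith [norm_nonneg (p - e)]
    have h0' := norm_eq_zero.mp h0
    rw [sub_eq_zero] at h0'
    exact h0'.symm
  refine ⟨q, hq_mem, hq_sa.star_eq, hq_idem, b * W, star b, ?_, ?_⟩
  · rw [← hep', hedef]
  · rw [← mul_assoc, ← hhdef, hhW]
end

section
/- Let R and S be rings (not necessarily unital) and let s : R → R and h : R → S be ring homomorphisms with h ∘ s = h. Let a ∈ R be an idempotent and suppose there exists x ∈ R with a·s(a) + x − a·s(a)·x = 0 (i.e., a·s(a) is left quasi-regular, as happens when a·s(a) lies in the Jacobson radical). Then h(a) = 0. (This is the key computation in the proof of Theorem 6.2.) -/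
/-- **Key computation in the proof of Theorem 6.2.** Let `R`, `S` be (not necessarily
unital) rings and `s : R → R`, `h : R → S` ring homomorphisms with `h ∘ s = h`. If
`a ∈ R` is idempotent and `a·s(a)` is left quasi-regular (there is `x` with
`a·s(a) + x − a·s(a)·x = 0`), then `h(a) = 0`. -/
theorem stmt4 {R S : Type*} [NonUnitalRing R] [NonUnitalRing S]
    (s : R →ₙ+* R) (h : R →ₙ+* S) (hhs : h.comp s = h)
    (a : R) (ha : a * a = a)
    (hqr : ∃ x : R, a * s a + x - a * s a * x = 0) :
    h a = 0 := by
  obtain ⟨x, hx⟩ := hqr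
  have hs : h (s a) = h a := DFunLike.congr_fun hhs a
  have hidem : h a * h a = h a := by rw [← map_mul, ha]
  have key : h (a * s a) = h a := by rw [map_mul, hs, hidem]
  have e : h a + h x - h a * h x = 0 := by
    have := congrArg h hx
    simpa [map_sub, map_add, map_mul, key] using this
  have e2 : h a * (h a + h x - h a * h x) = 0 := by rw [e, mul_zero]
  rw [mul_sub, mul_add, hidem, ← mul_assoc, hidem] at e2
  -- e2 : h a + h a * h x - h a * h x = 0
  have : h a = h a + h a * h x - h a * h x := by abel
  rw [this, e2]
end

section
/- Let K be a field, K(t) the field of rational functions over K, σ the unique K-algebra automorphism of K(t) with σ(t) = 1 − t, and v : M₂(K(t)) → M₂(K(t)) the map defined by v(m)(i,j) = σ(m(1−i, 1−j)) (entrywise application of σ composed with reflection of the matrix across the anti-diagonal). Let c ∈ M₂(K(t)) be the matrix with entries c₀₀ = (1−t)²(1+2t), c₀₁ = t(1−t)(1+2t), c₁₀ = t(1−t)(3−2t), c₁₁ = t²(3−2t). Then: (a) c is idempotent, c·c = c; (b) v(c) = c; (c) every entry of c − c₀ is the image in K(t) of a polynomial divisible by t. (These are the key properties of the matrix c in the proof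 of Theorem 9.1.) -/
open RatFunc in
/-- **Key properties of the matrix `c` in the proof of Theorem 9.1.** Let `K` be a
field, `σ` the unique `K`-algebra automorphism of `K(t)` with `σ(t) = 1 − t`, and `v`
the map on `M₂(K(t))` given by `v(m)(i,j) = σ(m(1−i, 1−j))`. Let `c` be the matrix with
entries `c₀₀ = (1−t)²(1+2t)`, `c₀₁ = t(1−t)(1+2t)`, `c₁₀ = t(1−t)(3−2t)`,
`c₁₁ = t²(3−2t)`. Then (a) `c` is idempotent; (b) `v(c) = c`; (c) every entry of
`c − c₀` is the image in `K(t)` of a polynomial divisible by `t`. -/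
theorem stmt7 {K : Type*} [Field K]
    (σ : RatFunc K ≃ₐ[K] RatFunc K) (hσ : σ (RatFunc.X) = 1 - RatFunc.X)
    (c : Matrix (Fin 2) (Fin 2) (RatFunc K))
    (hc : c = !![(1 - X)^2 * (1 + 2*X), X*(1 - X)*(1 + 2*X);
                 X*(1 - X)*(3 - 2*X), X^2*(3 - 2*X)]) :
    c * c = c ∧
    (∀ i j : Fin 2, σ (c (1 - i) (1 - j)) = c i j) ∧
    (∀ i j : Fin 2, ∃ p : Polynomial K, Polynomial.X ∣ p ∧
      (c - (!![1, 0; 0, 0] : Matrix (Fin 2) (Fin 2) (RatFunc K))) i j = algebraMap (Polynomial K) (RatFunc K) p) := by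
  subst hc
  refine ⟨?_, ?_, ?_⟩
  · ext i j
    fin_cases i <;> fin_cases j <;>
      simp [Matrix.mul_apply, Fin.sum_univ_two] <;> ring
  · have h2 : σ (2:RatFunc K) = 2 := map_ofNat _ 2
    have h3 : σ (3:RatFunc K) = 3 := map_ofNat _ 3
    intro i j
    fin_cases i <;> fin_cases j <;>
      simp only [Fin.mk_zero, Fin.mk_one, show (1:Fin 2) - 0 = 1 from rfl, show (1:Fin 2) - 1 = 0 from rfl, Matrix.cons_val', Matrix.cons_val_zero, Matrix.cons_val_one, Matrix.head_cons, Matrix.head_fin_const, Matrix.of_apply, Matrix.cons_val_fin_one, map_mul, map_pow, map_sub, map_add, map_one, map_ofNat, hσ, h2, h3] <;> ring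
  · intro i j
    fin_cases i <;> fin_cases j
    · exact ⟨Polynomial.X * (2*Polynomial.X^2 - 3*Polynomial.X), dvd_mul_right _ _, by
        simp [map_mul, map_sub, map_add, map_pow, map_one, map_ofNat, RatFunc.algebraMap_X]; ring⟩
    · exact ⟨Polynomial.X * ((1 - Polynomial.X)*(1 + 2*Polynomial.X)), dvd_mul_right _ _, by
        simp [map_mul, map_sub, map_add, map_pow, map_one, map_ofNat, RatFunc.algebraMap_X]; ring⟩
    · exact ⟨Polynomial.X * ((1 - Polynomial.X)*(3 - 2*Polynomial.X)), dvd_mul_right _ _, by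
        simp [map_mul, map_sub, map_add, map_pow, map_one, map_ofNat, RatFunc.algebraMap_X]; ring⟩
    · exact ⟨Polynomial.X * (Polynomial.X*(3 - 2*Polynomial.X)), dvd_mul_right _ _, by
        simp [map_mul, map_sub, map_add, map_pow, map_one, map_ofNat, RatFunc.algebraMap_X]; ring⟩
end

section
/- Let K be a field. The Jacobson radical of the ring C_K equals t·M₂(K(t)₀), that is, the set of matrices in M₂(K(t)) all of whose entries lie in t·K(t)₀. (This is established in the proof of Theorem 9.1.) -/
/-- `x ∈ K(t)₀`: `x` is expressible as `p/q` with polynomials `p, q` such that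
`q(0) ≠ 0`. -/
def InK0 (K : Type*) [Field K] (x : RatFunc K) : Prop :=
  ∃ p q : Polynomial K, q.eval 0 ≠ 0 ∧
    x = algebraMap (Polynomial K) (RatFunc K) p / algebraMap (Polynomial K) (RatFunc K) q

section Lemmas

variable {K : Type*} [Field K]

theorem inK0_zero : InK0 K 0 := ⟨0, 1, by simp, by simp⟩

theorem inK0_one : InK0 K 1 := ⟨1, 1, by simp, by simp⟩

theorem inK0_add {x y : RatFunc K} (hx : InK0 K x) (hy : InK0 K y) : InK0 K (x + y) := by
  obtain ⟨p₁, q₁, h₁, rfl⟩ := hx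
  obtain ⟨p₂, q₂, h₂, rfl⟩ := hy
  have hq₁ : q₁ ≠ 0 := fun h => h₁ (by simp [h])
  have hq₂ : q₂ ≠ 0 := fun h => h₂ (by simp [h])
  refine ⟨p₁ * q₂ + q₁ * p₂, q₁ * q₂, by simp [h₁, h₂], ?_⟩
  rw [div_add_div _ _ (by simpa using hq₁) (by simpa using hq₂)]
  simp [map_mul, map_add]

theorem inK0_neg {x : RatFunc K} (hx : InK0 K x) : InK0 K (-x) := by
  obtain ⟨p, q, h, rfl⟩ := hx
  exact ⟨-p, q, h, by rw [map_neg, neg_div]⟩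

theorem inK0_mul {x y : RatFunc K} (hx : InK0 K x) (hy : InK0 K y) : InK0 K (x * y) := by
  obtain ⟨p₁, q₁, h₁, rfl⟩ := hx
  obtain ⟨p₂, q₂, h₂, rfl⟩ := hy
  exact ⟨p₁ * p₂, q₁ * q₂, by simp [h₁, h₂], by rw [div_mul_div_comm, map_mul, map_mul]⟩

end Lemmas

/-- `C_K`: the subring of `M₂(K(t))` consisting of matrices whose diagonal entries lie
in `K(t)₀` and whose off-diagonal entries lie in `t·K(t)₀`. -/
def CK (K : Type*) [Field K] : Subring (Matrix (Fin 2) (Fin 2) (RatFunc K)) where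
  carrier := {m | (∀ i j, InK0 K (m i j)) ∧
    ∀ i j, i ≠ j → ∃ y : RatFunc K, InK0 K y ∧ m i j = RatFunc.X * y}
  zero_mem' := ⟨fun i j => by simpa using inK0_zero,
    fun i j hij => ⟨0, inK0_zero, by simp⟩⟩
  one_mem' := by
    refine ⟨fun i j => ?_, fun i j hij => ⟨0, inK0_zero, by simp [Matrix.one_apply_ne hij]⟩⟩
    by_cases h : i = j
    · subst h; simpa [Matrix.one_apply_eq] using inK0_one
    · simpa [Matrix.one_apply_ne h] using inK0_zero
  add_mem' := by
    rintro a b ⟨ha₁, ha₂⟩ ⟨hb₁, hb₂⟩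
    refine ⟨fun i j => by simpa [Matrix.add_apply] using inK0_add (ha₁ i j) (hb₁ i j),
      fun i j hij => ?_⟩
    obtain ⟨y₁, hy₁, e₁⟩ := ha₂ i j hij
    obtain ⟨y₂, hy₂, e₂⟩ := hb₂ i j hij
    exact ⟨y₁ + y₂, inK0_add hy₁ hy₂, by simp [Matrix.add_apply, e₁, e₂, mul_add]⟩
  neg_mem' := by
    rintro a ⟨ha₁, ha₂⟩
    refine ⟨fun i j => by simpa [Matrix.neg_apply] using inK0_neg (ha₁ i j),
      fun i j hij => ?_⟩
    obtain ⟨y, hy, e⟩ := ha₂ i j hij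
    exact ⟨-y, inK0_neg hy, by simp [Matrix.neg_apply, e]⟩
  mul_mem' := by
    rintro a b ⟨ha₁, ha₂⟩ ⟨hb₁, hb₂⟩
    have key : ∀ (i j : Fin 2), i ≠ j →
        ∀ f : Fin 2 → RatFunc K, ∑ k, f k = f i + f j := by
      intro i j hij f
      fin_cases i <;> fin_cases j <;> simp_all [Fin.sum_univ_two, add_comm]
    refine ⟨fun i j => ?_, fun i j hij => ?_⟩
    · rw [Matrix.mul_apply, Fin.sum_univ_two]
      exact inK0_add (inK0_mul (ha₁ i 0) (hb₁ 0 j)) (inK0_mul (ha₁ i 1) (hb₁ 1 j))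
    · obtain ⟨y₁, hy₁, e₁⟩ := ha₂ i j hij
      obtain ⟨y₂, hy₂, e₂⟩ := hb₂ i j hij
      rw [Matrix.mul_apply, key i j hij]
      refine ⟨a i i * y₂ + y₁ * b j j,
        inK0_add (inK0_mul (ha₁ i i) hy₂) (inK0_mul hy₁ (hb₁ j j)), ?_⟩
      rw [e₁, e₂]; ring

/-! `K(t)₀` is the local ring `K[t]_(t)` and `t·K(t)₀` its maximal ideal, so an element of `C_K`
whose entries all lie in `t·K(t)₀` has determinant `≡ 1` modulo `t`, hence is invertible in `C_K`
via its adjugate; this gives the inclusion `t·M₂(K(t)₀) ⊆ J(C_K)`. Conversely, if a diagonal entry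
`z i i` of `z ∈ J(C_K)` were a unit of `K(t)₀`, then `1 - z i i⁻¹ E_ii z` would have a zero column
and so could not be left invertible. -/

open Matrix

def InXK0 (K : Type*) [Field K] (x : RatFunc K) : Prop :=
  ∃ y : RatFunc K, InK0 K y ∧ x = RatFunc.X * y

section LocalRing

variable {K : Type*} [Field K] {x y a : RatFunc K}

theorem inXK0_zero : InXK0 K 0 := ⟨0, inK0_zero, (mul_zero _).symm⟩

theorem InXK0.inK0 (hx : InXK0 K x) : InK0 K x := by
  obtain ⟨y, ⟨p, q, hq, rfl⟩, rfl⟩ := hx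
  exact ⟨Polynomial.X * p, q, hq, by rw [map_mul, RatFunc.algebraMap_X, mul_div_assoc]⟩

theorem InXK0.add (hx : InXK0 K x) (hy : InXK0 K y) : InXK0 K (x + y) := by
  obtain ⟨a, ha, rfl⟩ := hx
  obtain ⟨b, hb, rfl⟩ := hy
  exact ⟨a + b, inK0_add ha hb, (mul_add _ _ _).symm⟩

theorem InXK0.neg (hx : InXK0 K x) : InXK0 K (-x) := by
  obtain ⟨a, ha, rfl⟩ := hx
  exact ⟨-a, inK0_neg ha, (mul_neg _ _).symm⟩

theorem InXK0.sub (hx : InXK0 K x) (hy : InXK0 K y) : InXK0 K (x - y) :=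
  sub_eq_add_neg x y ▸ hx.add hy.neg

theorem InXK0.mul_left (ha : InK0 K a) (hx : InXK0 K x) : InXK0 K (a * x) := by
  obtain ⟨b, hb, rfl⟩ := hx
  exact ⟨a * b, inK0_mul ha hb, mul_left_comm _ _ _⟩

theorem not_inXK0_one : ¬ InXK0 K 1 := by
  rintro ⟨y, ⟨p, q, hq, rfl⟩, h⟩
  have hq₀ : algebraMap (Polynomial K) (RatFunc K) q ≠ 0 :=
    (map_ne_zero_iff _ (RatFunc.algebraMap_injective K)).2 fun h₀ => hq (by simp [h₀])
  rw [← mul_div_assoc, eq_comm, div_eq_one_iff_eq hq₀, ← RatFunc.algebraMap_X, ← map_mul] at h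
  apply hq
  simp [← RatFunc.algebraMap_injective K h]

theorem not_inXK0_one_add (hx : InXK0 K x) : ¬ InXK0 K (1 + x) := fun h =>
  not_inXK0_one (add_sub_cancel_right (1 : RatFunc K) x ▸ h.sub hx)

theorem InK0.inv_of_not_inXK0 (hx : InK0 K x) (hx' : ¬ InXK0 K x) : InK0 K x⁻¹ := by
  obtain ⟨p, q, hq, rfl⟩ := hx
  have hp : p.eval 0 ≠ 0 := by
    intro hp
    obtain ⟨p', rfl⟩ : Polynomial.X ∣ p := by
      rwa [Polynomial.X_dvd_iff, Polynomial.coeff_zero_eq_eval_zero]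
    exact hx' ⟨_, ⟨p', q, hq, rfl⟩, by rw [map_mul, RatFunc.algebraMap_X, mul_div_assoc]⟩
  exact ⟨q, p, hp, inv_div _ _⟩

end LocalRing

section MatrixRing

variable {K : Type*} [Field K] {m : Matrix (Fin 2) (Fin 2) (RatFunc K)}

theorem mem_CK_iff : m ∈ CK K ↔ (∀ i j, InK0 K (m i j)) ∧ ∀ i j, i ≠ j → InXK0 K (m i j) :=
  Iff.rfl

theorem mem_CK_iff_fin_two :
    m ∈ CK K ↔ InK0 K (m 0 0) ∧ InK0 K (m 1 1) ∧ InXK0 K (m 0 1) ∧ InXK0 K (m 1 0) := by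
  refine ⟨fun ⟨h, h'⟩ => ⟨h 0 0, h 1 1, h' 0 1 (by decide), h' 1 0 (by decide)⟩, ?_⟩
  rintro ⟨h₀₀, h₁₁, h₀₁, h₁₀⟩
  refine ⟨fun i j => ?_, fun i j hij => ?_⟩ <;> fin_cases i <;> fin_cases j <;>
    first | assumption | exact InXK0.inK0 ‹_› | exact absurd rfl hij

theorem single_mem_CK {c : RatFunc K} (hc : InK0 K c) (i : Fin 2) : single i i c ∈ CK K := by
  refine mem_CK_iff.2 ⟨fun k l => ?_, fun k l hkl => ?_⟩
  · by_cases h : i = k ∧ i = l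
    · obtain ⟨rfl, rfl⟩ := h
      simpa using hc
    · simpa [h] using (inK0_zero : InK0 K 0)
  · have h : ¬(i = k ∧ i = l) := fun h => hkl (h.1.symm.trans h.2)
    simpa [h] using (inXK0_zero : InXK0 K 0)

theorem smul_mem_CK {c : RatFunc K} (hc : InK0 K c) (hm : m ∈ CK K) : c • m ∈ CK K :=
  mem_CK_iff.2
    ⟨fun i j => inK0_mul hc (hm.1 i j), fun i j hij => InXK0.mul_left hc (hm.2 i j hij)⟩

theorem adjugate_mem_CK (hm : m ∈ CK K) : m.adjugate ∈ CK K := by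
  obtain ⟨h₀₀, h₁₁, h₀₁, h₁₀⟩ := mem_CK_iff_fin_two.1 hm
  rw [adjugate_fin_two, mem_CK_iff_fin_two]
  simpa using ⟨h₁₁, h₀₀, h₀₁.neg, h₁₀.neg⟩

theorem inK0_det (hm : m ∈ CK K) : InK0 K m.det := by
  rw [det_fin_two, sub_eq_add_neg]
  exact inK0_add (inK0_mul (hm.1 0 0) (hm.1 1 1)) (inK0_neg (inK0_mul (hm.1 0 1) (hm.1 1 0)))

theorem inXK0_mul_apply {a b : Matrix (Fin 2) (Fin 2) (RatFunc K)}
    (ha : ∀ i j, InK0 K (a i j)) (hb : ∀ i j, InXK0 K (b i j)) (i j : Fin 2) :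
    InXK0 K ((a * b) i j) := by
  rw [mul_apply, Fin.sum_univ_two]
  exact ((hb 0 j).mul_left (ha i 0)).add ((hb 1 j).mul_left (ha i 1))

theorem not_inXK0_det_add_one {a : Matrix (Fin 2) (Fin 2) (RatFunc K)}
    (ha : ∀ i j, InXK0 K (a i j)) : ¬ InXK0 K (a + 1).det := by
  have hdet : (a + 1).det = 1 + (a 0 0 + a 1 1 + a 0 0 * a 1 1 - a 0 1 * a 1 0) := by
    simp only [det_fin_two, Matrix.add_apply, one_apply_eq, one_apply_ne zero_ne_one,
      one_apply_ne one_ne_zero, add_zero]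
    ring
  rw [hdet]
  exact not_inXK0_one_add
    ((((ha 0 0).add (ha 1 1)).add ((ha 1 1).mul_left (ha 0 0).inK0)).sub
      ((ha 1 0).mul_left (ha 0 1).inK0))

theorem exists_mem_CK_mul_eq_one (hm : m ∈ CK K) (hdet : ¬ InXK0 K m.det) :
    ∃ v ∈ CK K, v * m = 1 := by
  have hdet₀ : m.det ≠ 0 := fun h => hdet (h ▸ inXK0_zero)
  refine ⟨m.det⁻¹ • m.adjugate,
    smul_mem_CK ((inK0_det hm).inv_of_not_inXK0 hdet) (adjugate_mem_CK hm), ?_⟩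
  rw [smul_mul_assoc, adjugate_mul, smul_smul, inv_mul_cancel₀ hdet₀, one_smul]

end MatrixRing

theorem Ideal.mem_jacobson_bot_iff_exists_mul_add_one {R : Type*} [Ring R] {x : R} :
    x ∈ Ideal.jacobson (⊥ : Ideal R) ↔ ∀ y, ∃ z, z * (y * x + 1) = 1 := by
  simp only [Ideal.mem_jacobson_iff, Ideal.mem_bot, sub_eq_zero, mul_add, mul_one, mul_assoc]

theorem Matrix.single_neg_inv_mul_add_one_apply {n R : Type*} [Fintype n] [DecidableEq n]
    [Field R] (m : Matrix n n R) {i : n} (hm : m i i ≠ 0) (k : n) :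
    (single i i (-(m i i)⁻¹) * m + 1) k i = 0 := by
  obtain rfl | hk := eq_or_ne k i
  · simp [inv_mul_cancel₀ hm]
  · simp [single_mul_apply_of_ne _ _ _ _ _ hk, one_apply_ne hk]

/-- **From the proof of Theorem 9.1.** The Jacobson radical of the ring `C_K`
(the intersection of its maximal left ideals) equals `t·M₂(K(t)₀)`: a member `z` of
`C_K` lies in the Jacobson radical if and only if all of its entries lie in
`t·K(t)₀`. -/
theorem stmt9 {K : Type*} [Field K] (z : CK K) :
    z ∈ Ideal.jacobson (⊥ : Ideal (CK K)) ↔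
      ∀ i j, ∃ y : RatFunc K, InK0 K y ∧
        (z : Matrix (Fin 2) (Fin 2) (RatFunc K)) i j = RatFunc.X * y := by
  rw [Ideal.mem_jacobson_bot_iff_exists_mul_add_one]
  constructor
  · intro h i j
    obtain rfl | hij := eq_or_ne i j
    · by_contra hz
      have hz₀ : (z : Matrix (Fin 2) (Fin 2) (RatFunc K)) i i ≠ 0 := fun h₀ => hz (h₀ ▸ inXK0_zero)
      obtain ⟨v, hv⟩ :=
        h ⟨_, single_mem_CK (inK0_neg ((z.2.1 i i).inv_of_not_inXK0 hz)) i⟩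
      have hvii := congrArg (fun w : CK K => (w : Matrix (Fin 2) (Fin 2) (RatFunc K)) i i) hv
      simp [mul_apply, single_neg_inv_mul_add_one_apply _ hz₀] at hvii
    · exact z.2.2 i j hij
  · intro hz y
    obtain ⟨v, hv, hv₁⟩ := exists_mem_CK_mul_eq_one (y * z + 1).2
      (not_inXK0_det_add_one (inXK0_mul_apply y.2.1 hz))
    exact ⟨⟨v, hv⟩, Subtype.ext hv₁⟩
end

section
/- In the C*-algebra C([0,1], M₂(ℂ)), let c be the continuous function c(t) = [[1−t, √(t(1−t))],[√(t(1−t)), t]], and let v : C([0,1], M₂(ℂ)) → C([0,1], M₂(ℂ)) be defined by v(x)(t)(i,j) = x(1−t)(1−i, 1−j). Then: (a) c is a projection (self-adjoint and idempotent); (b) c(0) = c₀, so c belongs to the subalgebra D; (c) v(c) = c. (These are the key properties of the projection c in the proof of Theorem 10.6.) -/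
open unitInterval

/-- `D`: the C*-subalgebra of `C([0,1], M₂(ℂ))` consisting of the continuous functions
`x` such that `x(0)` is a diagonal matrix. -/
def Dset : Set C(I, Matrix (Fin 2) (Fin 2) ℂ) :=
  {x | ∀ i j : Fin 2, i ≠ j → x 0 i j = 0}

lemma sqrt_sq_I (t : I) :
    ((Real.sqrt ((t : ℝ) * (1 - (t : ℝ))) : ℝ) : ℂ) * ((Real.sqrt ((t : ℝ) * (1 - (t : ℝ))) : ℝ) : ℂ)
      = ((t : ℝ) : ℂ) * (1 - ((t : ℝ) : ℂ)) := by
  rw [← Complex.ofReal_mul,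
    Real.mul_self_sqrt (mul_nonneg t.2.1 (by linarith [t.2.2] : (0:ℝ) ≤ 1 - (t : ℝ)))]
  push_cast
  ring

/-- **Key properties of the projection `c` in the proof of Theorem 10.6.** In
`C([0,1], M₂(ℂ))`, let `c(t) = [[1−t, √(t(1−t))],[√(t(1−t)), t]]` and let
`v(x)(t)(i,j) = x(1−t)(1−i, 1−j)`. Then (a) `c` is a projection; (b) `c(0) = c₀`, so
`c` belongs to the subalgebra `D`; (c) `v(c) = c`. -/
theorem stmt10 (c : C(I, Matrix (Fin 2) (Fin 2) ℂ))
    (hc : ∀ t : I, c t =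
      !![((1 - (t : ℝ) : ℝ) : ℂ), ((Real.sqrt ((t : ℝ) * (1 - (t : ℝ))) : ℝ) : ℂ);
         ((Real.sqrt ((t : ℝ) * (1 - (t : ℝ))) : ℝ) : ℂ), (((t : ℝ) : ℝ) : ℂ)]) :
    (star c = c ∧ c * c = c) ∧
    (c 0 = !![1, 0; 0, 0] ∧ c ∈ Dset) ∧
    (∀ (t : I) (i j : Fin 2), c (unitInterval.symm t) (1 - i) (1 - j) = c t i j) := by
  have h0 : c 0 = !![1, 0; 0, 0] := by
    rw [hc 0]
    norm_num [show ((0 : I) : ℝ) = 0 from rfl]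
  refine ⟨⟨?_, ?_⟩, ⟨h0, ?_⟩, ?_⟩
  · ext t i j
    simp only [ContinuousMap.coe_star, Pi.star_apply, Matrix.star_apply, hc t]
    fin_cases i <;> fin_cases j <;>
      simp [Matrix.conjTranspose_apply, Complex.star_def, Complex.conj_ofReal]
  · ext t i j
    have key := sqrt_sq_I t
    simp only [ContinuousMap.coe_mul, Pi.mul_apply, hc t]
    fin_cases i <;> fin_cases j <;>
      · simp [Matrix.mul_apply, Fin.sum_univ_two]
        first
        | ring1
        | (rw [key]; ring1)
  · intro i j hij
    rw [h0]
    fin_cases i <;> fin_cases j <;> simp_all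
  · intro t i j
    rw [hc t, hc (unitInterval.symm t)]
    have hsymm : ((unitInterval.symm t : ℝ)) = 1 - (t : ℝ) := rfl
    fin_cases i <;> fin_cases j <;> simp [hsymm] <;> ring_nf
end

section
/- Let n ≥ 1 and let e be a projection in D_n. Then e is unitarily equivalent in D_n to the constant function with value e(0): there exists a unitary u ∈ D_n such that e = u · (const e(0)) · u*, where const e(0) denotes the constant function [0,1] → M_{2n}(ℂ) with value e(0) (which belongs to D_n since e(0) is block-diagonal). (Lemma 10.4 of the paper.) -/
/-!
Put `w = qp + (1 - q)(1 - p)` for projections `p, q`. Then `wp = qw` and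
`w⋆w = ww⋆ = 1 - (q - p)²`, which is invertible once `‖q - p‖ < 1`; the unitary part
`w (w⋆w)^(-1/2)` of `w` therefore conjugates `p` to `q`, and every ⋆-homomorphism identifying
`p` and `q` sends it to `1`. Along the path of projections `s ↦ (t ↦ e (s t))` from the constant
function `e 0` to `e`, all of whose members take the value `e 0` at `0`, these local conjugacies
chain together by connectedness of `[0, 1]` into a unitary that is `1` at `0`, hence lies in `D_n`.
-/

open unitInterval

/-- `D_n`: the C*-subalgebra of `C([0,1], M_{2n}(ℂ))` (indices split as
`Fin n ⊕ Fin n`) consisting of the continuous functions `x` such that `x(0)` is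
block-diagonal with two `n × n` blocks. -/
def Dn (n : ℕ) : Set C(I, Matrix (Fin n ⊕ Fin n) (Fin n ⊕ Fin n) ℂ) :=
  {x | ∀ i j : Fin n ⊕ Fin n, i.isLeft ≠ j.isLeft → x 0 i j = 0}

open scoped NNReal CStarAlgebra Matrix.Norms.L2Operator

section Intertwiner

variable {R : Type*} [Ring R]

def intertwiner (p q : R) : R := q * p + (1 - q) * (1 - p)

variable {p q : R}

lemma intertwiner_mul (hp : IsIdempotentElem p) (hq : IsIdempotentElem q) :
    intertwiner p q * p = q * intertwiner p q := by
  simp only [intertwiner, add_mul, mul_add, sub_mul, mul_sub, one_mul, mul_one, mul_assoc, hp.eq,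
    hq.eq, hq.mul_self_mul]
  abel

lemma intertwiner_self (hp : IsIdempotentElem p) : intertwiner p p = 1 := by
  simp only [intertwiner, hp.eq, hp.one_sub.eq, add_sub_cancel]

lemma intertwiner_mul_intertwiner (hp : IsIdempotentElem p) (hq : IsIdempotentElem q) :
    intertwiner q p * intertwiner p q = 1 - (q - p) ^ 2 := by
  simp only [intertwiner, sq, add_mul, mul_add, sub_mul, mul_sub, one_mul, mul_one, mul_assoc,
    hp.eq, hq.eq, hq.mul_self_mul]
  abel

lemma commute_sub_sq (hp : IsIdempotentElem p) (hq : IsIdempotentElem q) :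
    Commute p ((q - p) ^ 2) := by
  simp only [Commute, SemiconjBy, sq, sub_mul, mul_sub, mul_assoc, hp.eq, hq.eq, hp.mul_self_mul]
  abel

lemma star_intertwiner [StarRing R] (hp : IsSelfAdjoint p) (hq : IsSelfAdjoint q) :
    star (intertwiner p q) = intertwiner q p := by
  simp [intertwiner, hp.star_eq, hq.star_eq]

lemma map_intertwiner {S F : Type*} [Ring S] [FunLike F R S] [RingHomClass F R S] (f : F) :
    f (intertwiner p q) = intertwiner (f p) (f q) := by
  simp [intertwiner]

end Intertwiner

section CStarAlgebra

variable {A : Type*} [CStarAlgebra A]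

lemma Commute.rpow_left [PartialOrder A] [StarOrderedRing A] {a c : A} (h : Commute a c) (y : ℝ) :
    Commute (a ^ y) c := by
  rw [CFC.rpow_def]
  exact h.cfc_nnreal _

lemma mul_rpow_neg_one_half_mem_unitary [PartialOrder A] [StarOrderedRing A] {w : A}
    [IsStarNormal w] (hw : IsStrictlyPositive (star w * w)) :
    w * (star w * w) ^ (-(1 / 2) : ℝ) ∈ unitary A := by
  have hnormal : w * star w = star w * w := (star_comm_self' w).symm
  set a := star w * w with ha
  set b := a ^ (-(1 / 2) : ℝ)
  have hbab : b * a * b = 1 := CFC.conjugate_rpow_neg_one_half a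
  have hb : IsSelfAdjoint b := IsSelfAdjoint.of_nonneg CFC.rpow_nonneg
  have haw : Commute a w :=
    calc a * w = w * star w * w := by rw [hnormal]
      _ = w * a := by rw [mul_assoc, ha]
  have hbw : Commute b w := haw.rpow_left _
  have hba : Commute b a := (Commute.refl a).rpow_left _
  refine Unitary.mem_iff.2 ⟨?_, ?_⟩
  · rw [← hbab]
    simp only [star_mul, hb.star_eq, ha, mul_assoc]
  · calc w * b * star (w * b) = b * b * (w * star w) := by
          rw [star_mul, hb.star_eq, mul_assoc, ← mul_assoc b, ← mul_assoc, ← (hbw.mul_left hbw).eq,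
            mul_assoc]
      _ = b * a * b := by rw [hnormal, mul_assoc, mul_assoc, hba.eq]
      _ = 1 := hbab

lemma IsSelfAdjoint.isStrictlyPositive_one_sub [PartialOrder A] [StarOrderedRing A] {x : A}
    (hx : IsSelfAdjoint x) (h : ‖x‖ < 1) : IsStrictlyPositive (1 - x) := by
  refine ⟨sub_nonneg.2 ?_, isUnit_one_sub_of_norm_lt_one h⟩
  nontriviality A
  rw [← map_one (algebraMap ℝ A)]
  exact le_algebraMap_of_spectrum_le fun r hr =>
    (Real.le_norm_self r).trans ((spectrum.norm_le_norm_of_mem hr).trans h.le)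

theorem IsStarProjection.exists_unitary_conj_of_norm_sub_lt_one {B : Type*} [CStarAlgebra B]
    {p q : A} (hp : IsStarProjection p) (hq : IsStarProjection q) (hpq : ‖q - p‖ < 1)
    (π : A →⋆ₐ[ℂ] B) (hπ : π p = π q) :
    ∃ v ∈ unitary A, q = v * p * star v ∧ π v = 1 := by
  let := CStarAlgebra.spectralOrder A
  have := CStarAlgebra.spectralOrderedRing A
  let := CStarAlgebra.spectralOrder B
  have := CStarAlgebra.spectralOrderedRing B
  set w := intertwiner p q
  set a := 1 - (q - p) ^ 2
  have hw_star : star w = intertwiner q p := star_intertwiner hp.isSelfAdjoint hq.isSelfAdjoint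
  have hww : star w * w = a := by
    rw [hw_star]
    exact intertwiner_mul_intertwiner hp.isIdempotentElem hq.isIdempotentElem
  have hww' : w * star w = a := by
    rw [hw_star, intertwiner_mul_intertwiner hq.isIdempotentElem hp.isIdempotentElem,
      ← neg_sub q p, neg_sq]
  have ha : IsStrictlyPositive a := by
    refine IsSelfAdjoint.isStrictlyPositive_one_sub ?_ ?_
    · exact (hq.isSelfAdjoint.sub hp.isSelfAdjoint).pow 2
    · calc ‖(q - p) ^ 2‖ ≤ ‖q - p‖ ^ 2 := norm_pow_le' _ two_pos
        _ < 1 := by nlinarith [norm_nonneg (q - p)]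
  have : IsStarNormal w := ⟨hww.trans hww'.symm⟩
  have hv : w * a ^ (-(1 / 2) : ℝ) ∈ unitary A := by
    rw [← hww]
    exact mul_rpow_neg_one_half_mem_unitary (hww ▸ ha)
  refine ⟨_, hv, ?_, ?_⟩
  · have hpa : Commute (a ^ (-(1 / 2) : ℝ)) p :=
      ((Commute.one_left p).sub_left
        (commute_sub_sq hp.isIdempotentElem hq.isIdempotentElem).symm).rpow_left _
    have hvp : w * a ^ (-(1 / 2) : ℝ) * p = q * (w * a ^ (-(1 / 2) : ℝ)) := by
      rw [mul_assoc, hpa.eq, ← mul_assoc, intertwiner_mul hp.isIdempotentElem hq.isIdempotentElem,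
        mul_assoc]
    rw [hvp, mul_assoc, Unitary.mul_star_self_of_mem hv, mul_one]
  · have hπw : π w = 1 := by
      rw [map_intertwiner, hπ, intertwiner_self (hq.isIdempotentElem.map π)]
    have hπa : π a = 1 := by rw [← hww, map_mul, map_star, hπw, star_one, one_mul]
    have hf : ContinuousOn (fun t : ℝ≥0 => t ^ (-(1 / 2) : ℝ)) (spectrum ℝ≥0 a) :=
      NNReal.continuousOn_rpow_const (Or.inl ((spectrum.zero_notMem_iff ℝ≥0).2 ha.isUnit))
    rw [map_mul, hπw, one_mul, CFC.rpow_def, StarAlgHom.map_cfc π _ a hf (map_continuous π)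
      ha.nonneg (hπa ▸ zero_le_one), hπa, ← CFC.rpow_def, CFC.one_rpow]

theorem IsStarProjection.exists_unitary_conj_of_continuous {X B : Type*} [TopologicalSpace X]
    [PreconnectedSpace X] [CStarAlgebra B] {E : X → A} (hE : Continuous E)
    (hproj : ∀ x, IsStarProjection (E x)) (π : A →⋆ₐ[ℂ] B) (hπ : ∀ x y, π (E x) = π (E y))
    (x y : X) : ∃ v ∈ unitary A, E y = v * E x * star v ∧ π v = 1 := by
  refine PreconnectedSpace.induction₂'
    (fun x y => ∃ v ∈ unitary A, E y = v * E x * star v ∧ π v = 1) (fun x => ?_)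
    ⟨fun x y z => ?_⟩ x y
  · filter_upwards [hE.continuousAt.eventually (Metric.ball_mem_nhds (E x) one_pos)] with y hy
    rw [dist_eq_norm] at hy
    exact ⟨(hproj x).exists_unitary_conj_of_norm_sub_lt_one (hproj y) hy π (hπ x y),
      (hproj y).exists_unitary_conj_of_norm_sub_lt_one (hproj x) (norm_sub_rev (E y) (E x) ▸ hy) π
        (hπ y x)⟩
  · rintro ⟨u, hu, hxy, hπu⟩ ⟨v, hv, hyz, hπv⟩
    refine ⟨v * u, mul_mem hv hu, ?_, by rw [map_mul, hπv, hπu, one_mul]⟩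
    rw [hyz, hxy, star_mul]
    simp only [mul_assoc]

end CStarAlgebra

/-- Unlike `ContinuousMap.evalStarAlgHom`, this allows a noncommutative codomain. -/
@[simps]
def ContinuousMap.pointEvalStarAlgHom {X A : Type*} [TopologicalSpace X] [CStarAlgebra A] (x : X) :
    C(X, A) →⋆ₐ[ℂ] A where
  toFun f := f x
  map_one' := rfl
  map_mul' _ _ := rfl
  map_zero' := rfl
  map_add' _ _ := rfl
  commutes' _ := rfl
  map_star' _ := rfl

theorem stmt11_general (n : ℕ)
    (e : C(I, Matrix (Fin n ⊕ Fin n) (Fin n ⊕ Fin n) ℂ))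
    (he : e ∈ Dn n) (he_sa : star e = e) (he_idem : e * e = e) :
    ∃ u : C(I, Matrix (Fin n ⊕ Fin n) (Fin n ⊕ Fin n) ℂ), u ∈ Dn n ∧
      u * star u = 1 ∧ star u * u = 1 ∧
      ContinuousMap.const I (e 0) ∈ Dn n ∧
      e = u * ContinuousMap.const I (e 0) * star u := by
  let scale : I → C(I, I) := fun s => ⟨(s * ·), by fun_prop⟩
  let E : C(I, C(I, Matrix (Fin n ⊕ Fin n) (Fin n ⊕ Fin n) ℂ)) :=
    (e.comp ⟨fun st : I × I => st.1 * st.2, by fun_prop⟩).curry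
  have hE : ∀ s, E s = ContinuousMap.compStarAlgHom' ℂ _ (scale s) e := fun _ => rfl
  have hproj : ∀ s, IsStarProjection (E s) := fun s =>
    hE s ▸ IsStarProjection.map ⟨he_idem, he_sa⟩ (ContinuousMap.compStarAlgHom' ℂ _ (scale s))
  obtain ⟨u, hu, hconj, hu0⟩ := IsStarProjection.exists_unitary_conj_of_continuous E.continuous
    hproj (ContinuousMap.pointEvalStarAlgHom 0) (fun s t => by simp [hE, scale]) 0 1
  have hE0 : E 0 = ContinuousMap.const I (e 0) := by ext; simp [E]
  have hE1 : E 1 = e := by ext; simp [E]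
  refine ⟨u, fun i j hij => ?_, Unitary.mul_star_self_of_mem hu, Unitary.star_mul_self_of_mem hu,
    he, by rw [← hE0, ← hE1, hconj]⟩
  rw [← ContinuousMap.pointEvalStarAlgHom_apply (A := Matrix _ _ ℂ), hu0]
  exact Matrix.one_apply_ne (fun h => hij (congrArg Sum.isLeft h))

/-- **Lemma 10.4.** Every projection `e` of `D_n` is unitarily equivalent in `D_n` to
the constant function with value `e(0)` (which belongs to `D_n` since `e(0)` is
block-diagonal): there is a unitary `u ∈ D_n` with `e = u · (const e(0)) · u*`. -/
theorem stmt11 (n : ℕ) (hn : 1 ≤ n)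
    (e : C(I, Matrix (Fin n ⊕ Fin n) (Fin n ⊕ Fin n) ℂ))
    (he : e ∈ Dn n) (he_sa : star e = e) (he_idem : e * e = e) :
    ∃ u : C(I, Matrix (Fin n ⊕ Fin n) (Fin n ⊕ Fin n) ℂ), u ∈ Dn n ∧
      u * star u = 1 ∧ star u * u = 1 ∧
      ContinuousMap.const I (e 0) ∈ Dn n ∧
      e = u * ContinuousMap.const I (e 0) * star u :=
  stmt11_general n e he he_sa he_idem
end

section
/- Let γ ∈ C([0,1], M₂(ℂ)) be the function γ(t) = [[sin((π/2)t), cos((π/2)t)], [−cos((π/2)t), sin((π/2)t)]]. Then: (a) γ is a unitary element of C([0,1], M₂(ℂ)); (b) for every x ∈ D the element γ·x·γ* again belongs to D, so x ↦ γ·x·γ* restricts to a *-automorphism s of D; (c) (γ·x·γ*)(1) = x(1) for every x ∈ C([0,1], M₂(ℂ)), i.e., evaluation at 1 composed with s equals evaluation at 1; (d) s(c₀) is Murray–von Neumann equivalent in D to the constant function c₁, and s(c₁) is Murray–von Neumann equivalent in D to the constant function c₀. (These are the claims established in the proof of Proposition 10.8.) -/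
open unitInterval Real

/-- **Claims established in the proof of Proposition 10.8.** Let
`γ(t) = [[sin((π/2)t), cos((π/2)t)], [−cos((π/2)t), sin((π/2)t)]]` in
`C([0,1], M₂(ℂ))`. Then (a) `γ` is unitary; (b) `x ↦ γ·x·γ*` maps `D` into `D`;
(c) `(γ·x·γ*)(1) = x(1)` for every `x`; (d) `γ·c₀·γ*` is Murray–von Neumann equivalent
in `D` to the constant function `c₁`, and `γ·c₁·γ*` is Murray–von Neumann equivalent in
`D` to the constant function `c₀`. -/
theorem stmt13 (γ : C(I, Matrix (Fin 2) (Fin 2) ℂ))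
    (hγ : ∀ t : I, γ t =
      !![((Real.sin (π / 2 * (t : ℝ)) : ℝ) : ℂ), ((Real.cos (π / 2 * (t : ℝ)) : ℝ) : ℂ);
         ((-Real.cos (π / 2 * (t : ℝ)) : ℝ) : ℂ), ((Real.sin (π / 2 * (t : ℝ)) : ℝ) : ℂ)]) :
    (γ * star γ = 1 ∧ star γ * γ = 1) ∧
    (∀ x ∈ Dset, γ * x * star γ ∈ Dset) ∧
    (∀ x : C(I, Matrix (Fin 2) (Fin 2) ℂ), (γ * x * star γ) 1 = x 1) ∧
    (∃ x y : C(I, Matrix (Fin 2) (Fin 2) ℂ), x ∈ Dset ∧ y ∈ Dset ∧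
      γ * ContinuousMap.const I (!![1, 0; 0, 0]) * star γ = x * y ∧
      ContinuousMap.const I (!![0, 0; 0, 1]) = y * x) ∧
    (∃ x y : C(I, Matrix (Fin 2) (Fin 2) ℂ), x ∈ Dset ∧ y ∈ Dset ∧
      γ * ContinuousMap.const I (!![0, 0; 0, 1]) * star γ = x * y ∧
      ContinuousMap.const I (!![1, 0; 0, 0]) = y * x) := by
  have hI0 : ((0 : I) : ℝ) = 0 := rfl
  have hI1 : ((1 : I) : ℝ) = 1 := rfl
  have key : ∀ t : I,
      ((Real.sin (π / 2 * (t : ℝ)) : ℂ))^2 + ((Real.cos (π / 2 * (t : ℝ)) : ℂ))^2 = 1 := by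
    intro t; exact_mod_cast Real.sin_sq_add_cos_sq (π / 2 * (t : ℝ))
  have hγ0 : γ 0 = !![(0 : ℂ), 1; -1, 0] := by
    rw [hγ 0]; norm_num [hI0]
  have hγ1 : γ 1 = (1 : Matrix (Fin 2) (Fin 2) ℂ) := by
    rw [hγ 1, Matrix.one_fin_two]; norm_num [hI1]
  refine ⟨⟨?_, ?_⟩, ?_, ?_, ?_, ?_⟩
  · ext t i j
    have h' := key t
    simp only [ContinuousMap.mul_apply, ContinuousMap.star_apply, ContinuousMap.one_apply,
      hγ t, Matrix.star_eq_conjTranspose]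
    fin_cases i <;> fin_cases j <;>
      simp only [Matrix.mul_apply, Fin.sum_univ_two, Matrix.conjTranspose_apply,
        Matrix.cons_val', Matrix.cons_val_zero, Matrix.cons_val_one, Matrix.head_cons,
        Matrix.head_fin_const, Matrix.empty_val', Matrix.cons_val_fin_one, Matrix.of_apply,
        Matrix.one_apply, Complex.star_def, Complex.conj_ofReal, map_neg, mul_neg, neg_neg,
        Complex.ofReal_neg, Fin.mk_zero, Fin.mk_one, if_true] <;>
      first | linear_combination h' | linear_combination -h' |
        (rw [if_neg (by decide)]; ring1) | ring1
  · ext t i j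
    have h' := key t
    simp only [ContinuousMap.mul_apply, ContinuousMap.star_apply, ContinuousMap.one_apply,
      hγ t, Matrix.star_eq_conjTranspose]
    fin_cases i <;> fin_cases j <;>
      simp only [Matrix.mul_apply, Fin.sum_univ_two, Matrix.conjTranspose_apply,
        Matrix.cons_val', Matrix.cons_val_zero, Matrix.cons_val_one, Matrix.head_cons,
        Matrix.head_fin_const, Matrix.empty_val', Matrix.cons_val_fin_one, Matrix.of_apply,
        Matrix.one_apply, Complex.star_def, Complex.conj_ofReal, map_neg, mul_neg, neg_neg,
        Complex.ofReal_neg, Fin.mk_zero, Fin.mk_one, if_true] <;>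
      first | linear_combination h' | linear_combination -h' |
        (rw [if_neg (by decide)]; ring1) | ring1
  · intro x hx i j hij
    have h01 := hx 0 1 (by decide)
    have h10 := hx 1 0 (by decide)
    simp only [ContinuousMap.mul_apply, ContinuousMap.star_apply, hγ0,
      Matrix.star_eq_conjTranspose]
    fin_cases i <;> fin_cases j <;>
      first
      | exact absurd rfl hij
      | (simp only [Matrix.mul_apply, Fin.sum_univ_two, Matrix.conjTranspose_apply,
          Matrix.cons_val', Matrix.cons_val_zero, Matrix.cons_val_one, Matrix.head_cons,
          Matrix.head_fin_const, Matrix.empty_val', Matrix.cons_val_fin_one, Matrix.of_apply,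
          Complex.star_def, Complex.conj_ofReal, map_neg, mul_neg, neg_neg,
          Fin.mk_zero, Fin.mk_one, map_zero, map_one, star_zero, star_one,
          zero_mul, mul_zero, one_mul, mul_one, add_zero, zero_add, neg_zero]
         first
         | linear_combination -h10
         | linear_combination -h01
         | linear_combination h10
         | linear_combination h01
         | ring1)
  · intro x
    simp only [ContinuousMap.mul_apply, ContinuousMap.star_apply, hγ1,
      Matrix.star_eq_conjTranspose, Matrix.conjTranspose_one, one_mul, mul_one]
  · refine ⟨γ * ContinuousMap.const I !![(0:ℂ), 1; 0, 0],
      star (γ * ContinuousMap.const I !![(0:ℂ), 1; 0, 0]), ?_, ?_, ?_, ?_⟩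
    · intro i j hij
      simp only [ContinuousMap.mul_apply, ContinuousMap.const_apply, hγ0]
      fin_cases i <;> fin_cases j <;>
        first
        | exact absurd rfl hij
        | simp [Matrix.mul_apply, Fin.sum_univ_two]
    · intro i j hij
      simp only [ContinuousMap.star_apply, ContinuousMap.mul_apply, ContinuousMap.const_apply,
        hγ0, Matrix.star_eq_conjTranspose, Matrix.conjTranspose_apply]
      fin_cases i <;> fin_cases j <;>
        first
        | exact absurd rfl hij
        | simp [Matrix.mul_apply, Fin.sum_univ_two]
    · ext t i j
      have h' := key t
      simp only [ContinuousMap.mul_apply, ContinuousMap.star_apply, ContinuousMap.const_apply,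
        hγ t, Matrix.star_eq_conjTranspose]
      fin_cases i <;> fin_cases j <;>
        simp only [Matrix.mul_apply, Fin.sum_univ_two, Matrix.conjTranspose_apply,
          Matrix.cons_val', Matrix.cons_val_zero, Matrix.cons_val_one, Matrix.head_cons,
          Matrix.head_fin_const, Matrix.empty_val', Matrix.cons_val_fin_one, Matrix.of_apply,
          Complex.star_def, Complex.conj_ofReal, map_neg, map_add, map_mul, map_zero, map_one,
          mul_neg, neg_neg, Complex.ofReal_neg, Fin.mk_zero, Fin.mk_one, if_true,
          star_zero, star_one, zero_mul, mul_zero, one_mul, mul_one, add_zero, zero_add,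
          neg_zero] <;>
        first | linear_combination h' | linear_combination -h' | ring1
    · ext t i j
      have h' := key t
      simp only [ContinuousMap.mul_apply, ContinuousMap.star_apply, ContinuousMap.const_apply,
        hγ t, Matrix.star_eq_conjTranspose]
      fin_cases i <;> fin_cases j <;>
        simp only [Matrix.mul_apply, Fin.sum_univ_two, Matrix.conjTranspose_apply,
          Matrix.cons_val', Matrix.cons_val_zero, Matrix.cons_val_one, Matrix.head_cons,
          Matrix.head_fin_const, Matrix.empty_val', Matrix.cons_val_fin_one, Matrix.of_apply,
          Complex.star_def, Complex.conj_ofReal, map_neg, map_add, map_mul, map_zero, map_one,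
          mul_neg, neg_neg, Complex.ofReal_neg, Fin.mk_zero, Fin.mk_one, if_true,
          star_zero, star_one, zero_mul, mul_zero, one_mul, mul_one, add_zero, zero_add,
          neg_zero] <;>
        first | linear_combination h' | linear_combination -h' | ring1
  · refine ⟨γ * ContinuousMap.const I !![(0:ℂ), 0; 1, 0],
      star (γ * ContinuousMap.const I !![(0:ℂ), 0; 1, 0]), ?_, ?_, ?_, ?_⟩
    · intro i j hij
      simp only [ContinuousMap.mul_apply, ContinuousMap.const_apply, hγ0]
      fin_cases i <;> fin_cases j <;>
        first
        | exact absurd rfl hij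
        | simp [Matrix.mul_apply, Fin.sum_univ_two]
    · intro i j hij
      simp only [ContinuousMap.star_apply, ContinuousMap.mul_apply, ContinuousMap.const_apply,
        hγ0, Matrix.star_eq_conjTranspose, Matrix.conjTranspose_apply]
      fin_cases i <;> fin_cases j <;>
        first
        | exact absurd rfl hij
        | simp [Matrix.mul_apply, Fin.sum_univ_two]
    · ext t i j
      have h' := key t
      simp only [ContinuousMap.mul_apply, ContinuousMap.star_apply, ContinuousMap.const_apply,
        hγ t, Matrix.star_eq_conjTranspose]
      fin_cases i <;> fin_cases j <;>
        simp only [Matrix.mul_apply, Fin.sum_univ_two, Matrix.conjTranspose_apply,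
          Matrix.cons_val', Matrix.cons_val_zero, Matrix.cons_val_one, Matrix.head_cons,
          Matrix.head_fin_const, Matrix.empty_val', Matrix.cons_val_fin_one, Matrix.of_apply,
          Complex.star_def, Complex.conj_ofReal, map_neg, map_add, map_mul, map_zero, map_one,
          mul_neg, neg_neg, Complex.ofReal_neg, Fin.mk_zero, Fin.mk_one, if_true,
          star_zero, star_one, zero_mul, mul_zero, one_mul, mul_one, add_zero, zero_add,
          neg_zero] <;>
        first | linear_combination h' | linear_combination -h' | ring1
    · ext t i j
      have h' := key t
      simp only [ContinuousMap.mul_apply, ContinuousMap.star_apply, ContinuousMap.const_apply,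
        hγ t, Matrix.star_eq_conjTranspose]
      fin_cases i <;> fin_cases j <;>
        simp only [Matrix.mul_apply, Fin.sum_univ_two, Matrix.conjTranspose_apply,
          Matrix.cons_val', Matrix.cons_val_zero, Matrix.cons_val_one, Matrix.head_cons,
          Matrix.head_fin_const, Matrix.empty_val', Matrix.cons_val_fin_one, Matrix.of_apply,
          Complex.star_def, Complex.conj_ofReal, map_neg, map_add, map_mul, map_zero, map_one,
          mul_neg, neg_neg, Complex.ofReal_neg, Fin.mk_zero, Fin.mk_one, if_true,
          star_zero, star_one, zero_mul, mul_zero, one_mul, mul_one, add_zero, zero_add,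
          neg_zero] <;>
        first | linear_combination h' | linear_combination -h' | ring1
end
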